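/- For all N, M ≥ 1, the Kontsevich bracket satisfies {h^N, h^M}_K ≡ 0 mod [A,A]; i.e., the Hamiltonians π(h^k) are in involution. -/

import Mathlib

open scoped TensorProduct

noncomputable section

abbrev A : Type := MonoidAlgebra ℂ (FreeGroup Bool)

def u : A := MonoidAlgebra.of ℂ (FreeGroup Bool) (FreeGroup.of false)
def v : A := MonoidAlgebra.of ℂ (FreeGroup Bool) (FreeGroup.of true)
def ui : A := MonoidAlgebra.of ℂ (FreeGroup Bool) (FreeGroup.of false)⁻¹
def vi : A := MonoidAlgebra.of ℂ (FreeGroup Bool) (FreeGroup.of true)⁻¹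

/-- The structure of a Kontsevich double bracket on A: a bilinear map
A × A → A ⊗ A satisfying both Leibniz rules and the prescribed values on the
generators u, v. -/
structure KontsevichBracket (db : A →ₗ[ℂ] A →ₗ[ℂ] A ⊗[ℂ] A) : Prop where
  outer : ∀ a b c : A,
    db a (b * c) = db a b * ((1 : A) ⊗ₜ[ℂ] c) + (b ⊗ₜ[ℂ] (1 : A)) * db a c
  inner : ∀ a b c : A,
    db (a * b) c = db a c * (b ⊗ₜ[ℂ] (1 : A)) + ((1 : A) ⊗ₜ[ℂ] a) * db b c
  huv : db u v = -((v * u) ⊗ₜ[ℂ] (1 : A))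
  hvu : db v u = (u * v) ⊗ₜ[ℂ] (1 : A)
  huu : db u u = 0
  hvv : db v v = 0

def h : A := u + v + ui + vi + ui * vi

def commSpan : Submodule ℂ A := Submodule.span ℂ {x : A | ∃ a b : A, x = a * b - b * a}

/-!
Both Leibniz rules become cyclically invariant once `A ⊗ A` is multiplied out and projected to
`A ⧸ [A, A]`: for the inner bimodule structure this holds already under `μ`, for the outer one
modulo commutators. Weighting by `h ^ k ⊗ h ^ l`, one may therefore peel factors of `h` off either
argument: `{h ^ (n + 1), h ^ (m + 1)}_K ≡ (n + 1) (m + 1) μ(⟨⟨h, h⟩⟩ (h ^ n ⊗ h ^ m))`.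
Writing `⟨⟨h, h⟩⟩ = 1 ⊗ a - h ⊗ b + e ⊗ 1`, the right-hand side is the class of
`(a + e - h b) h ^ (n + m) = [h, v + u⁻¹] h ^ (n + m)`, a commutator because `h` commutes with
its powers.
-/

open TensorProduct LinearMap Algebra.TensorProduct

section

variable (R B : Type*) [CommRing R] [Ring B] [Algebra R B]

def commutatorSpan : Submodule R B := Submodule.span R {x : B | ∃ a b : B, x = a * b - b * a}

variable {R B}

theorem commutatorSpan_mkQ_mul_comm (x y : B) :
    (commutatorSpan R B).mkQ (x * y) = (commutatorSpan R B).mkQ (y * x) := by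
  rw [← sub_eq_zero, ← map_sub, Submodule.mkQ_apply, Submodule.Quotient.mk_eq_zero]
  exact Submodule.subset_span ⟨x, y, rfl⟩

theorem mul'_one_tmul_mul (a : B) (W : B ⊗[R] B) :
    mul' R B ((1 ⊗ₜ[R] a) * W) = mul' R B (W * (a ⊗ₜ[R] 1)) := by
  induction W using TensorProduct.induction_on with
  | zero => simp
  | tmul x y => simp [mul_assoc]
  | add W W' hW hW' => simp only [mul_add, add_mul, map_add, hW, hW']

theorem commutatorSpan_mkQ_mul'_tmul_one_mul (b : B) (W : B ⊗[R] B) :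
    (commutatorSpan R B).mkQ (mul' R B ((b ⊗ₜ[R] 1) * W)) =
      (commutatorSpan R B).mkQ (mul' R B (W * (1 ⊗ₜ[R] b))) := by
  induction W using TensorProduct.induction_on with
  | zero => simp
  | tmul x y =>
    simp only [tmul_mul_tmul, one_mul, mul_one, mul'_apply]
    rw [mul_assoc, commutatorSpan_mkQ_mul_comm, mul_assoc]
  | add W W' hW hW' => simp only [mul_add, add_mul, map_add, hW, hW']

theorem commutatorSpan_mkQ_mul'_mul_pow_tmul_pow_eq_zero {g a b e w : B}
    (hw : a + e - g * b = g * w - w * g) (n m : ℕ) :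
    (commutatorSpan R B).mkQ
      (mul' R B ((1 ⊗ₜ[R] a - g ⊗ₜ[R] b + e ⊗ₜ[R] 1) * ((g ^ n) ⊗ₜ[R] (g ^ m)))) = 0 := by
  set π := (commutatorSpan R B).mkQ
  have cyc (x y : B) : π (x * y) = π (y * x) := commutatorSpan_mkQ_mul_comm x y
  have trace_eq : π (mul' R B ((1 ⊗ₜ[R] a - g ⊗ₜ[R] b + e ⊗ₜ[R] 1) * ((g ^ n) ⊗ₜ[R] (g ^ m)))) =
      π ((a + e - g * b) * g ^ (m + n)) := by
    have middle_term : π (g * g ^ n * (b * g ^ m)) = π (g * b * g ^ (m + n)) := by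
      rw [cyc, mul_assoc g b, cyc g, mul_assoc, mul_assoc, ← pow_succ', ← pow_add, ← pow_succ,
        add_assoc]
    simp only [sub_mul, add_mul, tmul_mul_tmul, map_add, map_sub, mul'_apply, one_mul, middle_term]
    rw [cyc (g ^ n), mul_assoc, ← pow_add, mul_assoc e, ← pow_add, add_comm n m]
    abel
  rw [trace_eq, hw, sub_mul, map_sub, mul_assoc, cyc g, mul_assoc, pow_mul_comm', ← mul_assoc,
    sub_self]

namespace DoubleBracket

variable {D : B →ₗ[R] B →ₗ[R] B ⊗[R] B}

theorem apply_one_right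
    (outer : ∀ a b c : B, D a (b * c) = D a b * (1 ⊗ₜ[R] c) + (b ⊗ₜ[R] 1) * D a c) (a : B) :
    D a 1 = 0 := by
  simpa [← one_def] using outer a 1 1

theorem apply_one_left
    (inner : ∀ a b c : B, D (a * b) c = D a c * (b ⊗ₜ[R] 1) + (1 ⊗ₜ[R] a) * D b c) (c : B) :
    D 1 c = 0 := by
  simpa [← one_def] using inner 1 1 c

theorem apply_right_eq_of_mul_eq_one
    (outer : ∀ a b c : B, D a (b * c) = D a b * (1 ⊗ₜ[R] c) + (b ⊗ₜ[R] 1) * D a c)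
    {x y : B} (hxy : x * y = 1) (hyx : y * x = 1) (a : B) :
    D a y = -((y ⊗ₜ[R] 1) * D a x * (1 ⊗ₜ[R] y)) := by
  have h0 := congrArg ((y ⊗ₜ[R] (1 : B)) * ·) (outer a x y)
  simp only [hxy, apply_one_right outer, mul_zero, mul_add, ← mul_assoc, tmul_mul_tmul, hyx,
    mul_one, ← one_def, one_mul] at h0
  exact eq_neg_of_add_eq_zero_right h0.symm

theorem apply_left_eq_of_mul_eq_one
    (inner : ∀ a b c : B, D (a * b) c = D a c * (b ⊗ₜ[R] 1) + (1 ⊗ₜ[R] a) * D b c)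
    {x y : B} (hxy : x * y = 1) (hyx : y * x = 1) (c : B) :
    D y c = -((1 ⊗ₜ[R] y) * D x c * (y ⊗ₜ[R] 1)) := by
  have h0 := congrArg ((1 ⊗ₜ[R] y) * ·) (inner x y c)
  simp only [hxy, apply_one_left inner, mul_zero, mul_add, ← mul_assoc, tmul_mul_tmul, hyx,
    mul_one, ← one_def, one_mul] at h0
  exact eq_neg_of_add_eq_zero_right h0.symm

theorem mul'_apply_pow_succ_left
    (inner : ∀ a b c : B, D (a * b) c = D a c * (b ⊗ₜ[R] 1) + (1 ⊗ₜ[R] a) * D b c)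
    (g c t : B) (n k : ℕ) :
    mul' R B (D (g ^ (n + 1)) c * ((g ^ k) ⊗ₜ[R] t)) =
      (n + 1) • mul' R B (D g c * ((g ^ (n + k)) ⊗ₜ[R] t)) := by
  induction n generalizing k with
  | zero => simp
  | succ n ih =>
    rw [pow_succ, inner, add_mul, map_add, mul_assoc, mul_assoc, mul'_one_tmul_mul, mul_assoc]
    simp only [tmul_mul_tmul, one_mul, mul_one, ← pow_succ', ← pow_add, ih]
    ring_nf
    module

theorem commutatorSpan_mkQ_mul'_apply_pow_succ_right
    (outer : ∀ a b c : B, D a (b * c) = D a b * (1 ⊗ₜ[R] c) + (b ⊗ₜ[R] 1) * D a c)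
    (a g s : B) (m k : ℕ) :
    (commutatorSpan R B).mkQ (mul' R B (D a (g ^ (m + 1)) * (s ⊗ₜ[R] (g ^ k)))) =
      (m + 1) • (commutatorSpan R B).mkQ (mul' R B (D a g * (s ⊗ₜ[R] (g ^ (m + k))))) := by
  induction m generalizing k with
  | zero => simp
  | succ m ih =>
    rw [pow_succ', outer, add_mul, map_add, map_add, mul_assoc, mul_assoc,
      commutatorSpan_mkQ_mul'_tmul_one_mul, mul_assoc]
    simp only [tmul_mul_tmul, one_mul, mul_one, ← pow_succ, ← pow_add, ih]
    ring_nf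
    module

end DoubleBracket

end

theorem commSpan_eq_commutatorSpan : commSpan = commutatorSpan ℂ A := rfl

theorem u_mul_ui : u * ui = 1 := by rw [u, ui, ← map_mul, mul_inv_cancel, map_one]
theorem ui_mul_u : ui * u = 1 := by rw [u, ui, ← map_mul, inv_mul_cancel, map_one]
theorem v_mul_vi : v * vi = 1 := by rw [v, vi, ← map_mul, mul_inv_cancel, map_one]
theorem vi_mul_v : vi * v = 1 := by rw [v, vi, ← map_mul, inv_mul_cancel, map_one]

theorem u_mul_ui_mul (x : A) : u * (ui * x) = x := by rw [← mul_assoc, u_mul_ui, one_mul]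
theorem ui_mul_u_mul (x : A) : ui * (u * x) = x := by rw [← mul_assoc, ui_mul_u, one_mul]
theorem vi_mul_v_mul (x : A) : vi * (v * x) = x := by rw [← mul_assoc, vi_mul_v, one_mul]

theorem eq_h_mul_sub_mul_h :
    (ui + vi + vi * ui + ui * vi * ui - ui * vi + vi * ui * vi + ui * vi * ui * vi) +
        (u * v - v * u) - h * (ui * vi) = h * (v + ui) - (v + ui) * h := by
  simp only [h, mul_add, add_mul, mul_assoc, u_mul_ui, ui_mul_u, v_mul_vi, vi_mul_v, u_mul_ui_mul,
    mul_one]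
  abel

namespace KontsevichBracket

variable {db : A →ₗ[ℂ] A →ₗ[ℂ] A ⊗[ℂ] A}

theorem apply_h_h (hK : KontsevichBracket db) :
    db h h = 1 ⊗ₜ[ℂ] (ui + vi + vi * ui + ui * vi * ui - ui * vi + vi * ui * vi + ui * vi * ui * vi)
      - h ⊗ₜ[ℂ] (ui * vi) + (u * v - v * u) ⊗ₜ[ℂ] 1 := by
  have apply_ui := DoubleBracket.apply_right_eq_of_mul_eq_one hK.outer u_mul_ui ui_mul_u
  have apply_vi := DoubleBracket.apply_right_eq_of_mul_eq_one hK.outer v_mul_vi vi_mul_v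
  have ui_apply := DoubleBracket.apply_left_eq_of_mul_eq_one hK.inner u_mul_ui ui_mul_u
  have vi_apply := DoubleBracket.apply_left_eq_of_mul_eq_one hK.inner v_mul_vi vi_mul_v
  -- Negation on `A ⊗[ℂ] A` elaborates to the module negation `TensorProduct.neg`, which `simp`
  -- does not match against the ring negation of `neg_mul` and `mul_neg`.
  have neg_mul' (x y : A ⊗[ℂ] A) : -x * y = -(x * y) := neg_mul x y
  have mul_neg' (x y : A ⊗[ℂ] A) : x * -y = -(x * y) := mul_neg x y
  simp only [h, map_add, LinearMap.add_apply, hK.outer _ ui vi, hK.inner ui vi, apply_ui, apply_vi,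
    ui_apply, vi_apply, hK.huu, hK.huv, hK.hvu, hK.hvv, mul_zero, zero_mul, neg_zero, add_zero,
    zero_add, neg_mul', mul_neg', neg_neg, tmul_mul_tmul, mul_one, one_mul, mul_assoc, u_mul_ui,
    ui_mul_u, v_mul_vi, vi_mul_v, ui_mul_u_mul, vi_mul_v_mul, tmul_add, add_tmul, tmul_sub, sub_tmul]
  abel

end KontsevichBracket

theorem kontsevich_hamiltonians_in_involution
    (db : A →ₗ[ℂ] A →ₗ[ℂ] A ⊗[ℂ] A) (hK : KontsevichBracket db) :
    ∀ N M : ℕ, 1 ≤ N → 1 ≤ M →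
      LinearMap.mul' ℂ A (db (h ^ N) (h ^ M)) ∈ commSpan := by
  intro N M hN hM
  obtain ⟨n, rfl⟩ := Nat.exists_eq_add_of_le' hN
  obtain ⟨m, rfl⟩ := Nat.exists_eq_add_of_le' hM
  rw [commSpan_eq_commutatorSpan, ← Submodule.Quotient.mk_eq_zero, ← Submodule.mkQ_apply]
  set π := (commutatorSpan ℂ A).mkQ
  calc π (mul' ℂ A (db (h ^ (n + 1)) (h ^ (m + 1))))
      = π (mul' ℂ A (db (h ^ (n + 1)) (h ^ (m + 1)) * ((h ^ 0) ⊗ₜ[ℂ] (h ^ 0)))) := by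
        rw [pow_zero, ← one_def, mul_one]
    _ = (n + 1) • π (mul' ℂ A (db h (h ^ (m + 1)) * ((h ^ n) ⊗ₜ[ℂ] (h ^ 0)))) := by
        rw [DoubleBracket.mul'_apply_pow_succ_left hK.inner, map_nsmul, add_zero]
    _ = (n + 1) • (m + 1) • π (mul' ℂ A (db h h * ((h ^ n) ⊗ₜ[ℂ] (h ^ m)))) := by
        rw [DoubleBracket.commutatorSpan_mkQ_mul'_apply_pow_succ_right hK.outer, add_zero]
    _ = 0 := by
        rw [hK.apply_h_h, commutatorSpan_mkQ_mul'_mul_pow_tmul_pow_eq_zero eq_h_mul_sub_mul_h,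
          smul_zero, smul_zero]
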